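/- Let R be a T-region of a finite simple graph G, and let C be a cycle of G that contains all three simplicial vertices of R and at least one vertex of G not in R. Then the set of vertices of C lying in R, together with the edges of C having both endpoints in R, forms a path; this path contains all three outer vertices of R, and both of its endpoints are outer vertices of R. -/

import Mathlib

/-- The graph `T` on nine vertices: `0,1,2` are the outer vertices `o₁,o₂,o₃`,
`3,4,5` are `g₁,g₂,g₃` and `6,7,8` are the simplicial vertices `w₁,w₂,w₃`. -/
def TGraph : SimpleGraph (Fin 9) :=
  SimpleGraph.fromRel fun a b =>
    (a, b) ∈ ([(0,1),(0,2),(1,2),(3,4),(3,5),(4,5),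
      (3,0),(3,1),(4,1),(4,2),(5,2),(5,0),
      (6,0),(6,1),(6,3),(7,1),(7,2),(7,4),
      (8,2),(8,0),(8,5)] : List (Fin 9 × Fin 9))

/-!
Rotate `C` so that it starts at a vertex outside `R`. The vertices of `R` on `C` then fall into
maximal runs of consecutive cycle vertices, each flanked by vertices outside `R`. Inner vertices
have no neighbours outside `R`, so both ends of every run are outer vertices, and they are distinct
when the run contains some `wᵢ`. As there are only three outer vertices, all `wᵢ` lie in one
run `r`. Each `wᵢ` is interior to `r`, and of two distinct neighbours of `wᵢ` one is outer; so if
the third outer vertex were missing from `r`, every `wᵢ` would be next to an end of `r`, leaving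
room for only two of them. Hence `r` contains all outer vertices, there is no other run, and `r`
is the required path.
-/

namespace List

variable {α : Type*} {l r : List α} {x y y' : α}

theorem Nodup.snd_eq_of_pair_infix (hl : l.Nodup) (h : [x, y] <:+: l) (h' : [x, y'] <:+: l) :
    y = y' := by
  obtain ⟨s, t, rfl⟩ := h
  obtain ⟨s', t', h'⟩ := h'
  simp only [append_assoc, cons_append, nil_append] at hl h'
  have hxs : x ∉ s := fun hx => (nodup_append.1 hl).2.2 x hx x (mem_cons_self) rfl
  have hxt : x ∉ y :: t := (nodup_cons.1 (nodup_append.1 hl).2.1).1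
  exact (cons_eq_cons.1 ((append_cons_inj_of_notMem hxs hxt).1 h'.symm).2.2).1

theorem Nodup.fst_eq_of_pair_infix (hl : l.Nodup) (h : [x, y] <:+: l) (h' : [y', y] <:+: l) :
    x = y' :=
  (nodup_reverse.2 hl).snd_eq_of_pair_infix (reverse_infix.2 h) (reverse_infix.2 h')

theorem Nodup.not_pair_infix_of_head?_eq_some (hl : l.Nodup) (hx : l.head? = some x) :
    ¬ [y, x] <:+: l := by
  obtain ⟨t, rfl⟩ := head?_eq_some_iff.1 hx
  rintro ⟨s, u, h⟩
  cases s <;> grind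

theorem Nodup.not_pair_infix_of_getLast?_eq_some (hl : l.Nodup) (hx : l.getLast? = some x) :
    ¬ [x, y] <:+: l := fun h =>
  (nodup_reverse.2 hl).not_pair_infix_of_head?_eq_some (by rwa [head?_reverse]) (reverse_infix.2 h)

theorem Nodup.eq_singleton_of_head?_eq_getLast? (hl : l.Nodup) (hh : l.head? = some x)
    (ht : l.getLast? = some x) : l = [x] := by
  obtain ⟨t, rfl⟩ := head?_eq_some_iff.1 hh
  cases t with
  | nil => rfl
  | cons b t =>
    rw [getLast?_cons_cons] at ht
    exact absurd (mem_of_getLast? ht) (nodup_cons.1 hl).1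

theorem exists_triple_infix_of_mem (hx : x ∈ l) (hh : l.head? ≠ some x)
    (ht : l.getLast? ≠ some x) : ∃ u v, [u, x, v] <:+: l := by
  obtain ⟨s, t, rfl⟩ := append_of_mem hx
  obtain rfl | ⟨s, u, rfl⟩ := eq_nil_or_concat s
  · simp at hh
  rcases t with _ | ⟨v, t⟩
  · simp at ht
  exact ⟨u, v, s, t, by simp⟩

variable {p : α → Prop}

theorem pair_infix_filter_iff [DecidablePred p] (hl : l.filter p <:+: l) :
    [x, y] <:+: l.filter p ↔ [x, y] <:+: l ∧ p x ∧ p y := by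
  refine ⟨fun h => ⟨h.trans hl, ?_, ?_⟩, fun ⟨h, hx, hy⟩ => ?_⟩
  · simpa using (mem_filter.1 (h.subset (mem_cons_self))).2
  · simpa using (mem_filter.1 (h.subset (a := y) (by simp))).2
  · simpa [hx, hy] using h.filter p

theorem exists_eq_append_cons_of_exists_not (h : ∃ a ∈ l, ¬p a) :
    ∃ r y B, l = r ++ y :: B ∧ (∀ v ∈ r, p v) ∧ ¬p y := by
  classical
  obtain ⟨y, hy⟩ := Option.isSome_iff_exists.1 (find?_isSome.2 (by simpa using h) :
    (l.find? fun a => !decide (p a)).isSome)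
  obtain ⟨hpy, r, B, rfl, hr⟩ := find?_eq_some_iff_append.1 hy
  exact ⟨r, y, B, rfl, by simpa using hr, by simpa using hpy⟩

def IsFlankedRun (p : α → Prop) (l r : List α) : Prop :=
  ∃ A y y' B, l = A ++ y :: (r ++ y' :: B) ∧ ¬p y ∧ ¬p y' ∧ ∀ v ∈ r, p v

theorem exists_isFlankedRun (hh : ∀ a ∈ l.head?, ¬p a) (ht : ∀ a ∈ l.getLast?, ¬p a)
    (hx : x ∈ l) (hpx : p x) : ∃ r, IsFlankedRun p l r ∧ x ∈ r := by
  obtain ⟨s, t, rfl⟩ := append_of_mem hx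
  have hs : ∃ a ∈ s.reverse, ¬p a := by
    by_contra! hs
    rcases s with _ | ⟨c, s⟩
    · exact hh x (by simp) hpx
    · exact hh c (by simp) (hs c (by simp))
  have ht : ∃ a ∈ t, ¬p a := by
    by_contra! ht'
    obtain rfl | ⟨t, c, rfl⟩ := eq_nil_or_concat t
    · exact ht x (by simp) hpx
    · exact ht c (by simp [getLast?_cons]) (ht' c (by simp))
  obtain ⟨r₁, y, A, hA, hr₁, hy⟩ := exists_eq_append_cons_of_exists_not hs
  obtain ⟨r₂, y', B, rfl, hr₂, hy'⟩ := exists_eq_append_cons_of_exists_not ht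
  obtain rfl : s = A.reverse ++ y :: r₁.reverse := by simpa using congrArg reverse hA
  refine ⟨r₁.reverse ++ x :: r₂, ⟨A.reverse, y, y', B, by simp, hy, hy', ?_⟩, by simp⟩
  intro v hv
  simp only [mem_append, mem_reverse, mem_cons] at hv
  rcases hv with hv | rfl | hv
  exacts [hr₁ v hv, hpx, hr₂ v hv]

namespace IsFlankedRun

theorem isInfix (h : IsFlankedRun p l r) : r <:+: l := by
  obtain ⟨A, y, y', B, rfl, -⟩ := h
  exact ⟨A ++ [y], y' :: B, by simp⟩

theorem of_isInfix {K : List α} (h : IsFlankedRun p K r) (hK : K <:+: l) : IsFlankedRun p l r := by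
  obtain ⟨A, y, y', B, rfl, hy, hy', hr⟩ := h
  obtain ⟨s, t, rfl⟩ := hK
  exact ⟨s ++ A, y, y', B ++ t, by simp, hy, hy', hr⟩

theorem forall_mem (h : IsFlankedRun p l r) : ∀ v ∈ r, p v := by
  obtain ⟨-, -, -, -, -, -, -, hr⟩ := h
  exact hr

variable [DecidablePred p]

theorem filter_self (h : IsFlankedRun p l r) : r.filter p = r :=
  filter_eq_self.2 (by simpa using h.forall_mem)

theorem sublist_filter (h : IsFlankedRun p l r) : r <+ l.filter p := by
  simpa [h.filter_self] using (h.isInfix.filter p).sublist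

theorem filter_eq (h : IsFlankedRun p l r) (hnd : (l.filter p).Nodup)
    (hl : ∀ v ∈ l, p v → v ∈ r) : l.filter p = r :=
  (h.sublist_filter.eq_of_length_le (hnd.length_le_of_subset fun v hv => by
    simp only [mem_filter, decide_eq_true_eq] at hv
    exact hl v hv.1 hv.2)).symm

theorem exists_disjoint (h : IsFlankedRun p l r) (hh : ∀ a ∈ l.head?, ¬p a)
    (ht : ∀ a ∈ l.getLast?, ¬p a) (hnd : (l.filter p).Nodup) (hx : x ∈ l) (hpx : p x)
    (hxr : x ∉ r) : ∃ r', IsFlankedRun p l r' ∧ x ∈ r' ∧ r.Disjoint r' := by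
  have key : ∀ K, K <:+: l → (∀ a ∈ K.head?, ¬p a) → (∀ a ∈ K.getLast?, ¬p a) →
      (∀ v ∈ K, p v → v ∉ r) → x ∈ K → ∃ r', IsFlankedRun p l r' ∧ x ∈ r' ∧ r.Disjoint r' := by
    intro K hK hKh hKt hKr hxK
    obtain ⟨r', hr', hxr'⟩ := exists_isFlankedRun hKh hKt hxK hpx
    exact ⟨r', hr'.of_isInfix hK, hxr', fun v hvr hvr' =>
      hKr v (hr'.isInfix.subset hvr') (hr'.forall_mem v hvr') hvr⟩
  obtain ⟨A, y, y', B, rfl, hy, hy', -⟩ := id h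
  have hfil : (A ++ y :: (r ++ y' :: B)).filter p = A.filter p ++ (r ++ B.filter p) := by
    simp [filter_append, hy, hy', h.filter_self]
  rw [hfil, nodup_append, nodup_append] at hnd
  simp only [mem_append, mem_cons] at hx
  rcases hx with hx | rfl | hx | rfl | hx
  · refine key (A ++ [y]) ⟨[], r ++ y' :: B, by simp⟩ (by cases A <;> simp_all)
      (by simp [hy]) (fun v hv hpv hvr => ?_) (by simp [hx])
    have hvA : v ∈ A := by
      rcases mem_append.1 hv with hv | hv
      exacts [hv, absurd (mem_singleton.1 hv ▸ hpv) hy]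
    exact hnd.2.2 v (by simp [hvA, hpv]) v (by simp [hvr]) rfl
  · exact absurd hpx hy
  · exact absurd hx hxr
  · exact absurd hpx hy'
  · refine key (y' :: B) ⟨A ++ y :: r, [], by simp⟩ (by simp [hy'])
      (fun a ha => ?_) (fun v hv hpv hvr => ?_) (by simp [hx])
    · rcases eq_nil_or_concat B with rfl | ⟨B, c, rfl⟩ <;> simp_all [getLast?_cons]
    · have hvB : v ∈ B := (mem_cons.1 hv).resolve_left fun h => hy' (h ▸ hpv)
      exact hnd.2.1.2.2 v hvr v (by simp [hvB, hpv]) rfl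

end IsFlankedRun
end List

namespace SimpleGraph

variable {V : Type*} {G : SimpleGraph V} {u v x y : V}

theorem Walk.exists_isPath_of_filter_isInfix {W : G.Walk u v} {S : Set V} [DecidablePred (· ∈ S)]
    (hinf : W.support.filter (· ∈ S) <:+: W.support) (hnd : (W.support.filter (· ∈ S)).Nodup)
    (hx : (W.support.filter (· ∈ S)).head? = some x)
    (hy : (W.support.filter (· ∈ S)).getLast? = some y) :
    ∃ P : G.Walk x y, P.IsPath ∧ (∀ w, w ∈ P.support ↔ w ∈ W.support ∧ w ∈ S) ∧
      ∀ e, e ∈ P.edges ↔ e ∈ W.edges ∧ ∀ w ∈ e, w ∈ S := by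
  set r := W.support.filter (· ∈ S)
  have hne : r ≠ [] := by rintro h; simp [h] at hx
  let P := (Walk.ofSupport r hne (W.isChain_adj_support.infix hinf)).copy
    ((List.head_eq_iff_head?_eq_some hne).2 hx) ((List.getLast_eq_iff_getLast?_eq_some hne).2 hy)
  have hP : P.support = r := by simp [P]
  refine ⟨P, .mk' (hP ▸ hnd), fun w => by simp [hP, r], fun e => ?_⟩
  refine Sym2.ind (fun a b => ?_) e
  rw [← infix_support_iff_mem_edges, ← infix_support_iff_mem_edges, hP,
    List.pair_infix_filter_iff hinf, List.pair_infix_filter_iff hinf]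
  simp only [Sym2.mem_iff, forall_eq_or_imp, forall_eq]
  tauto

theorem Walk.IsCycle.nodup_filter_support {c : G.Walk u u} (hc : c.IsCycle) {S : Set V}
    [DecidablePred (· ∈ S)] (hu : u ∉ S) : (c.support.filter (· ∈ S)).Nodup := by
  rw [← c.cons_tail_support, List.filter_cons_of_neg (by simpa using hu)]
  exact hc.support_nodup.filter _

end SimpleGraph

instance : DecidableRel TGraph.Adj := by unfold TGraph; infer_instance

theorem TGraph.lt_three_or_lt_three_of_adj {w i j : Fin 9} (hw : 6 ≤ w.1) (hi : TGraph.Adj w i)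
    (hj : TGraph.Adj w j) (hij : i ≠ j) : i.1 < 3 ∨ j.1 < 3 := by
  revert w i j
  decide

structure IsTRegion {V : Type*} (G : SimpleGraph V) (φ : Fin 9 → V) : Prop where
  injective : Function.Injective φ
  adj_iff : ∀ i j, G.Adj (φ i) (φ j) ↔ TGraph.Adj i j
  mem_range_of_adj : ∀ i : Fin 9, 3 ≤ i.1 → ∀ v, G.Adj (φ i) v → v ∈ Set.range φ

namespace IsTRegion

open List

variable {V : Type*} {G : SimpleGraph V} {φ : Fin 9 → V} {l r : List V} {a b c w : Fin 9}

theorem lt_three_of_adj {i : Fin 9} {v : V} (hR : IsTRegion G φ) (h : G.Adj (φ i) v)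
    (hv : v ∉ Set.range φ) : i.1 < 3 := by
  by_contra hi
  exact hv (hR.mem_range_of_adj i (by omega) v h)

theorem exists_lt_three_of_adj_of_adj {x y : V} (hR : IsTRegion G φ) (hw : 6 ≤ w.1)
    (hx : G.Adj x (φ w)) (hy : G.Adj (φ w) y) (hxy : x ≠ y) :
    ∃ o : Fin 9, o.1 < 3 ∧ (φ o = x ∨ φ o = y) := by
  obtain ⟨i, rfl⟩ := hR.mem_range_of_adj w (by omega) x hx.symm
  obtain ⟨j, rfl⟩ := hR.mem_range_of_adj w (by omega) y hy
  rw [hR.adj_iff] at hx hy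
  rcases TGraph.lt_three_or_lt_three_of_adj hw hx.symm hy (ne_of_apply_ne φ hxy) with h | h
  exacts [⟨i, h, .inl rfl⟩, ⟨j, h, .inr rfl⟩]

theorem exists_ends_of_isFlankedRun (hR : IsTRegion G φ) (hl : l.IsChain G.Adj)
    (h : l.IsFlankedRun (· ∈ Set.range φ) r) (hr : r ≠ []) :
    ∃ a b : Fin 9, a.1 < 3 ∧ b.1 < 3 ∧ r.head? = some (φ a) ∧ r.getLast? = some (φ b) := by
  obtain ⟨A, y, y', B, rfl, hy, hy', hrS⟩ := h
  obtain ⟨v, t, hvt⟩ := exists_cons_of_ne_nil hr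
  obtain ⟨s, e, hse⟩ := (eq_nil_or_concat r).resolve_left hr
  obtain ⟨a, rfl⟩ := hrS v (by simp [hvt])
  obtain ⟨b, rfl⟩ := hrS e (by simp [hse])
  have hya : G.Adj y (φ a) := isChain_pair.1 (hl.infix ⟨A, t ++ y' :: B, by simp [hvt]⟩)
  have hby' : G.Adj (φ b) y' := isChain_pair.1 (hl.infix ⟨A ++ y :: s, B, by simp [hse]⟩)
  exact ⟨a, b, hR.lt_three_of_adj hya.symm hy, hR.lt_three_of_adj hby' hy', by simp [hvt],
    by simp [hse]⟩

theorem ne_of_simplicial_mem (hR : IsTRegion G φ) (hr : r.Nodup) (hw : 6 ≤ w.1) (hwr : φ w ∈ r)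
    (ha : a.1 < 3) (hra : r.head? = some (φ a)) (hrb : r.getLast? = some (φ b)) : a ≠ b := by
  rintro rfl
  rw [hr.eq_singleton_of_head?_eq_getLast? hra hrb, mem_singleton] at hwr
  have := hR.injective hwr
  omega

theorem pair_infix_of_simplicial_mem (hR : IsTRegion G φ) (hr : r.Nodup) (hc : r.IsChain G.Adj)
    (ha : a.1 < 3) (hb : b.1 < 3) (hab : a ≠ b) (hra : r.head? = some (φ a))
    (hrb : r.getLast? = some (φ b)) (hc3 : c.1 < 3) (hcr : φ c ∉ r) (hw : 6 ≤ w.1)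
    (hwr : φ w ∈ r) : [φ a, φ w] <:+: r ∨ [φ w, φ b] <:+: r := by
  have hwa : φ a ≠ φ w := fun h => by have := hR.injective h; omega
  have hwb : φ b ≠ φ w := fun h => by have := hR.injective h; omega
  obtain ⟨x, y, hxwy⟩ := exists_triple_infix_of_mem hwr (by simpa [hra] using hwa)
    (by simpa [hrb] using hwb)
  have hxw : [x, φ w] <:+: r := IsInfix.trans ⟨[], [y], rfl⟩ hxwy
  have hwy : [φ w, y] <:+: r := IsInfix.trans ⟨[x], [], rfl⟩ hxwy
  have hxy : x ≠ y := by rintro rfl; simpa using hxwy.nodup hr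
  have hab_of_mem : ∀ o : Fin 9, o.1 < 3 → φ o ∈ r → o = a ∨ o = b := fun o ho hor => by
    have hoc : o ≠ c := by rintro rfl; exact hcr hor
    have hac : a ≠ c := by rintro rfl; exact hcr (mem_of_head? hra)
    have hbc : b ≠ c := by rintro rfl; exact hcr (mem_of_getLast? hrb)
    omega
  obtain ⟨o, ho, rfl | rfl⟩ := hR.exists_lt_three_of_adj_of_adj hw
    (isChain_pair.1 (hc.infix hxw)) (isChain_pair.1 (hc.infix hwy)) hxy
  · rcases hab_of_mem o ho (hxw.subset mem_cons_self) with rfl | rfl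
    · exact .inl hxw
    · exact absurd hxw (hr.not_pair_infix_of_getLast?_eq_some hrb)
  · rcases hab_of_mem o ho (hwy.subset (by simp)) with rfl | rfl
    · exact absurd hwy (hr.not_pair_infix_of_head?_eq_some hra)
    · exact .inr hwy

theorem mem_of_simplicial_mem (hR : IsTRegion G φ) (hr : r.Nodup) (hc : r.IsChain G.Adj)
    (ha : a.1 < 3) (hb : b.1 < 3) (hab : a ≠ b) (hra : r.head? = some (φ a))
    (hrb : r.getLast? = some (φ b)) (hw : ∀ w : Fin 9, 6 ≤ w.1 → φ w ∈ r) (hc3 : c.1 < 3) :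
    φ c ∈ r := by
  by_contra hcr
  have key := fun w (hw6 : 6 ≤ w.1) =>
    hR.pair_infix_of_simplicial_mem hr hc ha hb hab hra hrb hc3 hcr hw6 (hw w hw6)
  have hsucc : ∀ {w w'}, [φ a, φ w] <:+: r → [φ a, φ w'] <:+: r → w = w' :=
    fun h h' => hR.injective (hr.snd_eq_of_pair_infix h h')
  have hpred : ∀ {w w'}, [φ w, φ b] <:+: r → [φ w', φ b] <:+: r → w = w' :=
    fun h h' => hR.injective (hr.fst_eq_of_pair_infix h h')
  -- two of the three `wᵢ` are next to the same end of `r`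
  rcases key 6 (by decide) with h6 | h6 <;> rcases key 7 (by decide) with h7 | h7 <;>
    rcases key 8 (by decide) with h8 | h8 <;> grind

theorem filter_isInfix [DecidablePred (· ∈ Set.range φ)] (hR : IsTRegion G φ)
    (hl : l.IsChain G.Adj) (hh : ∀ v ∈ l.head?, v ∉ Set.range φ)
    (ht : ∀ v ∈ l.getLast?, v ∉ Set.range φ) (hnd : (l.filter (· ∈ Set.range φ)).Nodup)
    (hw : ∀ w : Fin 9, 6 ≤ w.1 → φ w ∈ l) :
    ∃ a b : Fin 9, a.1 < 3 ∧ b.1 < 3 ∧ a ≠ b ∧ l.filter (· ∈ Set.range φ) <:+: l ∧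
      (l.filter (· ∈ Set.range φ)).head? = some (φ a) ∧
      (l.filter (· ∈ Set.range φ)).getLast? = some (φ b) ∧ ∀ c : Fin 9, c.1 < 3 → φ c ∈ l := by
  obtain ⟨r, hrun, h6⟩ := exists_isFlankedRun hh ht (hw 6 (by decide)) ⟨6, rfl⟩
  have hrnd : r.Nodup := hrun.sublist_filter.nodup hnd
  obtain ⟨a, b, ha, hb, hra, hrb⟩ := hR.exists_ends_of_isFlankedRun hl hrun (ne_nil_of_mem h6)
  have hab := hR.ne_of_simplicial_mem hrnd (by decide) h6 ha hra hrb
  -- a run through `wᵢ` other than `r` would have two distinct outer ends outside `r`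
  have hwr : ∀ w : Fin 9, 6 ≤ w.1 → φ w ∈ r := by
    intro w hw6
    by_contra hwr
    obtain ⟨r', hrun', hwr', hdisj⟩ := hrun.exists_disjoint hh ht hnd (hw w hw6) ⟨w, rfl⟩ hwr
    obtain ⟨a', b', ha', hb', hra', hrb'⟩ :=
      hR.exists_ends_of_isFlankedRun hl hrun' (ne_nil_of_mem hwr')
    have hab' := hR.ne_of_simplicial_mem (hrun'.sublist_filter.nodup hnd) hw6 hwr' ha' hra' hrb'
    have h₁ : ∀ i, φ i ∈ r' → i ≠ a ∧ i ≠ b := fun i hi =>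
      ⟨by rintro rfl; exact hdisj (mem_of_head? hra) hi,
        by rintro rfl; exact hdisj (mem_of_getLast? hrb) hi⟩
    have := h₁ a' (mem_of_head? hra')
    have := h₁ b' (mem_of_getLast? hrb')
    omega
  have houter : ∀ c : Fin 9, c.1 < 3 → φ c ∈ r := fun c hc =>
    hR.mem_of_simplicial_mem hrnd (hl.infix hrun.isInfix) ha hb hab hra hrb hwr hc
  have hfilter : l.filter (· ∈ Set.range φ) = r := by
    refine hrun.filter_eq hnd fun v hv hvS => ?_
    by_contra hvr
    obtain ⟨r', hrun', hvr', hdisj⟩ := hrun.exists_disjoint hh ht hnd hv hvS hvr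
    obtain ⟨a', -, ha', -, hra', -⟩ := hR.exists_ends_of_isFlankedRun hl hrun' (ne_nil_of_mem hvr')
    exact hdisj (houter a' ha') (mem_of_head? hra')
  rw [hfilter]
  exact ⟨a, b, ha, hb, hab, hrun.isInfix, hra, hrb, fun c hc => hrun.isInfix.subset (houter c hc)⟩

end IsTRegion

theorem cycle_through_T_region_general
    {V : Type*} (G : SimpleGraph V) (φ : Fin 9 → V)
    (hinj : Function.Injective φ)
    (hind : ∀ i j, G.Adj (φ i) (φ j) ↔ TGraph.Adj i j)
    (hclosed : ∀ i : Fin 9, 3 ≤ i.1 → ∀ v, G.Adj (φ i) v → v ∈ Set.range φ)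
    (u : V) (C : G.Walk u u) (hC : C.IsCycle)
    (hsimp : ∀ i : Fin 9, 6 ≤ i.1 → φ i ∈ C.support)
    (hout : ∃ z ∈ C.support, z ∉ Set.range φ) :
    ∃ s t : Fin 9, s.1 < 3 ∧ t.1 < 3 ∧ s ≠ t ∧
      ∃ P : G.Walk (φ s) (φ t), P.IsPath ∧
        (∀ v, v ∈ P.support ↔ v ∈ C.support ∧ v ∈ Set.range φ) ∧
        (∀ e, e ∈ P.edges ↔ e ∈ C.edges ∧ ∀ v ∈ e, v ∈ Set.range φ) ∧
        (∀ i : Fin 9, i.1 < 3 → φ i ∈ P.support) := by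
  classical
  obtain ⟨z, hzC, hz⟩ := hout
  set C' := C.rotate z hzC
  have hnd := (hC.rotate hzC).nodup_filter_support hz
  obtain ⟨a, b, ha, hb, hab, hinf, hra, hrb, houter⟩ :=
    IsTRegion.filter_isInfix ⟨hinj, hind, hclosed⟩ C'.isChain_adj_support
      (by rw [List.head?_eq_some_head C'.support_ne_nil, C'.head_support]; simpa using hz)
      (by rw [List.getLast?_eq_some_getLast C'.support_ne_nil, C'.getLast_support]; simpa using hz)
      hnd
      fun w hw => (C.mem_support_rotate_iff z hzC).2 (hsimp w hw)
  obtain ⟨P, hP, hsupp, hedges⟩ := C'.exists_isPath_of_filter_isInfix hinf hnd hra hrb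
  refine ⟨a, b, ha, hb, hab, P, hP, fun v => ?_, fun e => ?_, fun c hc => ?_⟩
  · rw [hsupp, C.mem_support_rotate_iff]
  · rw [hedges, (C.rotate_edges z hzC).mem_iff]
  · exact (hsupp _).2 ⟨houter c hc, c, rfl⟩

/-- If `R` is a `T`-region of `G` (given by the embedding `φ` of `T` into `G`,
inducing `R`, with no inner vertex adjacent to a vertex outside `R`) and `C`
is a cycle containing all three simplicial vertices of `R` and a vertex of
`G − R`, then the subgraph of `C` induced by the vertices of `R` is a path
containing all three outer vertices of `R`, two of them as its ends. -/
theorem cycle_through_T_region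
    {V : Type*} [Fintype V] (G : SimpleGraph V) (φ : Fin 9 → V)
    (hinj : Function.Injective φ)
    (hind : ∀ i j, G.Adj (φ i) (φ j) ↔ TGraph.Adj i j)
    (hclosed : ∀ i : Fin 9, 3 ≤ i.1 → ∀ v, G.Adj (φ i) v → v ∈ Set.range φ)
    (u : V) (C : G.Walk u u) (hC : C.IsCycle)
    (hsimp : ∀ i : Fin 9, 6 ≤ i.1 → φ i ∈ C.support)
    (hout : ∃ z ∈ C.support, z ∉ Set.range φ) :
    ∃ s t : Fin 9, s.1 < 3 ∧ t.1 < 3 ∧ s ≠ t ∧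
      ∃ P : G.Walk (φ s) (φ t), P.IsPath ∧
        (∀ v, v ∈ P.support ↔ v ∈ C.support ∧ v ∈ Set.range φ) ∧
        (∀ e, e ∈ P.edges ↔ e ∈ C.edges ∧ ∀ v ∈ e, v ∈ Set.range φ) ∧
        (∀ i : Fin 9, i.1 < 3 → φ i ∈ P.support) :=
  cycle_through_T_region_general G φ hinj hind hclosed u C hC hsimp hout
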